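/- arXiv:2103.16065 — 2 statements merged into one kernel-verified Lean document; each statement's English description precedes it below -/
import Mathlib

section
/- (Local energy conservation law of the coupled nonlinear Schrödinger equations) Let α, β ∈ ℝ and let u, v : ℝ × ℝ → ℂ, (x,t) ↦ u(x,t), v(x,t), be twice continuously differentiable solutions of i u_t + i α u_x + (1/2) u_xx + (|u|² + β|v|²) u = 0 and i v_t − i α v_x + (1/2) v_xx + (β|u|² + |v|²) v = 0. Write u = q₁ + i q₂, v = q₃ + i q₄ with q₁, q₂, q₃, q₄ real, and set p_i = (1/2) ∂_x q_i for i = 1,2,3,4, S = −(1/4)(q₁²+q₂²)² − (1/4)(q₃²+q₄²)² − (1/2) β (q₁²+q₂²)(q₃²+q₄²) − (p₁²+p₂²+p₃²+p₄²), E = S − α(q₂p₁ − q₁p₂ + q₃p₄ − q₄p₃) − (1/2) Σ_{i=1}^4 (q_i ∂_x p_i − 2 p_i²), and F = (1/2)( α(q₂∂_t q₁ − q₁∂_t q₂ + q₃∂_t q₄ − q₄∂_t q₃) + Σ_{i=1}^4 (q_i ∂_t p_i − p_i ∂_t q_i) ). Then ∂_t E + ∂_x F = 0 everywhere. -/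
/-!
Write each field as `w = a + i b` with speed `γ = ±α`. Then `E` is the quartic coupling
potential plus, for each field, the kinetic density `-(a a_xx + b b_xx)/4` and the transport
density `γ (a b_x - b a_x)/2`, and `F` is the sum of the matching fluxes. Each kinetic and each
transport pair satisfies an exact balance law `∂ₜe + ∂ₓf = s` whose source contains no third
derivatives, because mixed partials commute. The real and imaginary parts of the equation for `w`
turn the total source of `w` into `N_w (a aₜ + b bₜ)`, where `N_w` is its nonlinear coefficient,
and these sources are cancelled by the time derivative of the potential.

A `C²` field need not have `∂ₜ u_xx`, but the equation expresses `u_xx` through first derivatives,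
so `u_xx` is `C¹`; Peano's form of Schwarz's theorem, which assumes only `∂ₜ∂ₓ` continuous, then
gives `∂ₓ∂ₜ u_x = ∂ₜ u_xx`.
-/

open Function

noncomputable section

namespace CoupledNLS

variable {V W : Type*} [NormedAddCommGroup V] [NormedSpace ℝ V]
  [NormedAddCommGroup W] [NormedSpace ℝ W]

def derivX (f : ℝ → ℝ → V) (x t : ℝ) : V := deriv (fun ξ => f ξ t) x

def derivT (f : ℝ → ℝ → V) (x t : ℝ) : V := deriv (fun τ => f x τ) t

section Partial

variable {f : ℝ → ℝ → V} {x t : ℝ}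

theorem hasDerivAt_fderiv_apply_x (hf : DifferentiableAt ℝ (uncurry f) (x, t)) :
    HasDerivAt (fun ξ => f ξ t) (fderiv ℝ (uncurry f) (x, t) (1, 0)) x :=
  hf.hasFDerivAt.comp_hasDerivAt (f := fun ξ => (ξ, t)) x
    ((hasDerivAt_id x).prodMk (hasDerivAt_const x t))

theorem hasDerivAt_fderiv_apply_t (hf : DifferentiableAt ℝ (uncurry f) (x, t)) :
    HasDerivAt (fun τ => f x τ) (fderiv ℝ (uncurry f) (x, t) (0, 1)) t :=
  hf.hasFDerivAt.comp_hasDerivAt (f := fun τ => (x, τ)) t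
    ((hasDerivAt_const t x).prodMk (hasDerivAt_id t))

theorem hasDerivAt_derivX (hf : DifferentiableAt ℝ (uncurry f) (x, t)) :
    HasDerivAt (fun ξ => f ξ t) (derivX f x t) x := by
  have h := hasDerivAt_fderiv_apply_x hf
  rwa [derivX, h.deriv]

theorem hasDerivAt_derivT (hf : DifferentiableAt ℝ (uncurry f) (x, t)) :
    HasDerivAt (fun τ => f x τ) (derivT f x t) t := by
  have h := hasDerivAt_fderiv_apply_t hf
  rwa [derivT, h.deriv]

theorem contDiff_derivX {n : WithTop ℕ∞} (hf : ContDiff ℝ (n + 1) (uncurry f)) :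
    ContDiff ℝ n (uncurry (derivX f)) := by
  have h : uncurry (derivX f) = fun p => fderiv ℝ (uncurry f) p (1, 0) := by
    funext p
    exact (hasDerivAt_fderiv_apply_x ((hf.differentiable (by simp)) p)).deriv
  rw [h]
  exact (hf.fderiv_right le_rfl).clm_apply contDiff_const

theorem contDiff_derivT {n : WithTop ℕ∞} (hf : ContDiff ℝ (n + 1) (uncurry f)) :
    ContDiff ℝ n (uncurry (derivT f)) := by
  have h : uncurry (derivT f) = fun p => fderiv ℝ (uncurry f) p (0, 1) := by
    funext p
    exact (hasDerivAt_fderiv_apply_t ((hf.differentiable (by simp)) p)).deriv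
  rw [h]
  exact (hf.fderiv_right le_rfl).clm_apply contDiff_const

variable {g : ℝ → ℝ → W}

theorem contDiff_of_eq_clm {n : WithTop ℕ∞} (L : V →L[ℝ] W) (hg : ∀ x t, g x t = L (f x t))
    (hf : ContDiff ℝ n (uncurry f)) : ContDiff ℝ n (uncurry g) := by
  have h : uncurry g = L ∘ uncurry f := funext fun p => hg p.1 p.2
  exact h ▸ L.contDiff.comp hf

theorem derivX_of_eq_clm (L : V →L[ℝ] W) (hg : ∀ x t, g x t = L (f x t))
    (hf : Differentiable ℝ (uncurry f)) (x t : ℝ) : derivX g x t = L (derivX f x t) := by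
  have h : (fun ξ => g ξ t) = L ∘ fun ξ => f ξ t := funext fun ξ => hg ξ t
  rw [derivX, h]
  exact (L.hasFDerivAt.comp_hasDerivAt x (hasDerivAt_derivX (hf (x, t)))).deriv

theorem derivT_of_eq_clm (L : V →L[ℝ] W) (hg : ∀ x t, g x t = L (f x t))
    (hf : Differentiable ℝ (uncurry f)) (x t : ℝ) : derivT g x t = L (derivT f x t) := by
  have h : (fun τ => g x τ) = L ∘ fun τ => f x τ := funext fun τ => hg x τ
  rw [derivT, h]
  exact (L.hasFDerivAt.comp_hasDerivAt t (hasDerivAt_derivT (hf (x, t)))).deriv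

end Partial

section Peano

open Metric

variable {g gx gt gxt : ℝ → ℝ → V}

theorem norm_rectangle_increment_le (hgx : ∀ x t, HasDerivAt (fun ξ => g ξ t) (gx x t) x)
    (hgxt : ∀ x t, HasDerivAt (fun τ => gx x τ) (gxt x t) t) {x₀ t₀ δ ε : ℝ} {c : V}
    (hbound : ∀ x ∈ ball x₀ δ, ∀ t ∈ ball t₀ δ, ‖gxt x t - c‖ ≤ ε) {x t : ℝ}
    (hx : x ∈ ball x₀ δ) (ht : t ∈ ball t₀ δ) :
    ‖g x t - g x₀ t - (g x t₀ - g x₀ t₀) - ((x - x₀) * (t - t₀)) • c‖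
      ≤ ε * ‖x - x₀‖ * ‖t - t₀‖ := by
  have hδ : 0 < δ := pos_of_mem_ball hx
  have hslope : ∀ s ∈ ball x₀ δ, ‖gx s t - gx s t₀ - (t - t₀) • c‖ ≤ ε * ‖t - t₀‖ := by
    intro s hs
    have h := (convex_ball t₀ δ).norm_image_sub_le_of_norm_hasDerivWithin_le
      (f := fun τ => gx s τ - τ • c) (f' := fun τ => gxt s τ - c)
      (fun τ _ => ((hgxt s τ).sub ((hasDerivAt_id τ).smul_const c)).hasDerivWithinAt.congr_deriv
        (by rw [one_smul]))
      (fun τ hτ => hbound s hs τ hτ) (mem_ball_self hδ) ht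
    convert h using 2
    rw [sub_smul]
    abel
  have h := (convex_ball x₀ δ).norm_image_sub_le_of_norm_hasDerivWithin_le
    (f := fun s => g s t - g s t₀ - s • (t - t₀) • c)
    (f' := fun s => gx s t - gx s t₀ - (t - t₀) • c)
    (fun s _ => (((hgx s t).sub (hgx s t₀)).sub
        ((hasDerivAt_id s).smul_const ((t - t₀) • c))).hasDerivWithinAt.congr_deriv
        (by rw [one_smul]))
    hslope (mem_ball_self hδ) hx
  rw [mul_right_comm]
  convert h using 2
  rw [mul_smul, sub_smul]
  abel

theorem hasDerivAt_mixed_partial_comm (hgx : ∀ x t, HasDerivAt (fun ξ => g ξ t) (gx x t) x)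
    (hgt : ∀ x t, HasDerivAt (fun τ => g x τ) (gt x t) t)
    (hgxt : ∀ x t, HasDerivAt (fun τ => gx x τ) (gxt x t) t) {x₀ t₀ : ℝ}
    (hcont : ContinuousAt (uncurry gxt) (x₀, t₀)) :
    HasDerivAt (fun ξ => gt ξ t₀) (gxt x₀ t₀) x₀ := by
  rw [hasDerivAt_iff_isLittleO, Asymptotics.isLittleO_iff]
  intro ε hε
  obtain ⟨δ, hδ, hball⟩ := Metric.continuousAt_iff.1 hcont ε hε
  have hbound : ∀ x ∈ ball x₀ δ, ∀ t ∈ ball t₀ δ, ‖gxt x t - gxt x₀ t₀‖ ≤ ε :=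
    fun x hx t ht => by
      rw [← dist_eq_norm]
      exact (hball (x := (x, t)) (by rw [Prod.dist_eq]; exact max_lt hx ht)).le
  filter_upwards [ball_mem_nhds x₀ hδ] with x hx
  have hφ : HasDerivAt (fun τ => g x τ - g x₀ τ - ((x - x₀) * τ) • gxt x₀ t₀)
      (gt x t₀ - gt x₀ t₀ - (x - x₀) • gxt x₀ t₀) t₀ := by
    refine (((hgt x t₀).sub (hgt x₀ t₀)).sub
      (((hasDerivAt_id t₀).const_mul (x - x₀)).smul_const (gxt x₀ t₀))).congr_deriv ?_
    rw [mul_one]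
  refine hφ.le_of_lip' (by positivity) ?_
  filter_upwards [ball_mem_nhds t₀ hδ] with t ht
  convert norm_rectangle_increment_le hgx hgxt hbound hx ht using 2
  rw [mul_sub, sub_smul]
  abel

theorem hasDerivAt_derivT_of_contDiff {g : ℝ → ℝ → V} (hg : ContDiff ℝ 1 (uncurry g))
    (hgx : ContDiff ℝ 1 (uncurry (derivX g))) (x t : ℝ) :
    HasDerivAt (fun ξ => derivT g ξ t) (derivT (derivX g) x t) x :=
  hasDerivAt_mixed_partial_comm
    (fun x t => hasDerivAt_derivX (hg.differentiable one_ne_zero (x, t)))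
    (fun x t => hasDerivAt_derivT (hg.differentiable one_ne_zero (x, t)))
    (fun x t => hasDerivAt_derivT (hgx.differentiable one_ne_zero (x, t)))
    (contDiff_derivT (n := 0) hgx).continuous.continuousAt

end Peano

section Balance

def HasBalanceAt (e f : ℝ → ℝ → ℝ) (s x t : ℝ) : Prop :=
  ∃ e' f', HasDerivAt (fun τ => e x τ) e' t ∧ HasDerivAt (fun ξ => f ξ t) f' x ∧ e' + f' = s

variable {e f e₁ f₁ e₂ f₂ : ℝ → ℝ → ℝ} {s s₁ s₂ x t : ℝ}

theorem HasBalanceAt.derivT_add_derivX (h : HasBalanceAt e f s x t) :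
    derivT e x t + derivX f x t = s := by
  obtain ⟨e', f', he, hf, rfl⟩ := h
  rw [derivT, derivX, he.deriv, hf.deriv]

theorem HasBalanceAt.add (h₁ : HasBalanceAt e₁ f₁ s₁ x t) (h₂ : HasBalanceAt e₂ f₂ s₂ x t) :
    HasBalanceAt (e₁ + e₂) (f₁ + f₂) (s₁ + s₂) x t := by
  obtain ⟨e₁', f₁', he₁, hf₁, rfl⟩ := h₁
  obtain ⟨e₂', f₂', he₂, hf₂, rfl⟩ := h₂
  exact ⟨_, _, he₁.add he₂, hf₁.add hf₂, by ring⟩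

theorem HasBalanceAt.const_smul (c : ℝ) (h : HasBalanceAt e f s x t) :
    HasBalanceAt (c • e) (c • f) (c * s) x t := by
  obtain ⟨e', f', he, hf, rfl⟩ := h
  exact ⟨_, _, he.const_mul c, hf.const_mul c, by ring⟩

theorem hasBalanceAt_zero_flux (h : HasDerivAt (fun τ => e x τ) s t) : HasBalanceAt e 0 s x t :=
  ⟨s, 0, h, hasDerivAt_const x 0, add_zero s⟩

end Balance

section Densities

variable {q a b : ℝ → ℝ → ℝ}

def kineticDensity (q : ℝ → ℝ → ℝ) (x t : ℝ) : ℝ := q x t * derivX (derivX q) x t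

def kineticFlux (q : ℝ → ℝ → ℝ) (x t : ℝ) : ℝ :=
  derivX q x t * derivT q x t - q x t * derivT (derivX q) x t

def transportDensity (a b : ℝ → ℝ → ℝ) (x t : ℝ) : ℝ := a x t * derivX b x t - b x t * derivX a x t

def transportFlux (a b : ℝ → ℝ → ℝ) (x t : ℝ) : ℝ := b x t * derivT a x t - a x t * derivT b x t

theorem hasBalanceAt_kinetic (hq : ContDiff ℝ 2 (uncurry q))
    (hqxx : ContDiff ℝ 1 (uncurry (derivX (derivX q)))) (x t : ℝ) :
    HasBalanceAt (kineticDensity q) (kineticFlux q)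
      (2 * derivT q x t * derivX (derivX q) x t) x t := by
  have hqx : ContDiff ℝ 1 (uncurry (derivX q)) := contDiff_derivX hq
  have hq1 : ContDiff ℝ 1 (uncurry q) := hq.of_le one_le_two
  refine ⟨_, _, (hasDerivAt_derivT (hq1.differentiable one_ne_zero (x, t))).mul
      (hasDerivAt_derivT (hqxx.differentiable one_ne_zero (x, t))),
    ((hasDerivAt_derivX (hqx.differentiable one_ne_zero (x, t))).mul
      (hasDerivAt_derivT_of_contDiff hq1 hqx x t)).sub
      ((hasDerivAt_derivX (hq1.differentiable one_ne_zero (x, t))).mul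
        (hasDerivAt_derivT_of_contDiff hqx hqxx x t)), ?_⟩
  ring

theorem hasBalanceAt_transport (ha : ContDiff ℝ 2 (uncurry a)) (hb : ContDiff ℝ 2 (uncurry b))
    (x t : ℝ) :
    HasBalanceAt (transportDensity a b) (transportFlux a b)
      (2 * (derivT a x t * derivX b x t - derivT b x t * derivX a x t)) x t := by
  have ha1 : ContDiff ℝ 1 (uncurry a) := ha.of_le one_le_two
  have hb1 : ContDiff ℝ 1 (uncurry b) := hb.of_le one_le_two
  have hax : ContDiff ℝ 1 (uncurry (derivX a)) := contDiff_derivX ha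
  have hbx : ContDiff ℝ 1 (uncurry (derivX b)) := contDiff_derivX hb
  refine ⟨_, _, ((hasDerivAt_derivT (ha1.differentiable one_ne_zero (x, t))).mul
      (hasDerivAt_derivT (hbx.differentiable one_ne_zero (x, t)))).sub
      ((hasDerivAt_derivT (hb1.differentiable one_ne_zero (x, t))).mul
        (hasDerivAt_derivT (hax.differentiable one_ne_zero (x, t)))),
    ((hasDerivAt_derivX (hb1.differentiable one_ne_zero (x, t))).mul
      (hasDerivAt_derivT_of_contDiff ha1 hax x t)).sub
      ((hasDerivAt_derivX (ha1.differentiable one_ne_zero (x, t))).mul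
        (hasDerivAt_derivT_of_contDiff hb1 hbx x t)), ?_⟩
  ring

end Densities

section Schrodinger

open Complex ComplexConjugate

def schrodingerEnergy (γ : ℝ) (a b : ℝ → ℝ → ℝ) : ℝ → ℝ → ℝ :=
  (-(1 / 4) : ℝ) • (kineticDensity a + kineticDensity b) + (γ / 2) • transportDensity a b

def schrodingerFlux (γ : ℝ) (a b : ℝ → ℝ → ℝ) : ℝ → ℝ → ℝ :=
  (-(1 / 4) : ℝ) • (kineticFlux a + kineticFlux b) + (γ / 2) • transportFlux a b

variable {w : ℝ → ℝ → ℂ} {N : ℝ → ℝ → ℝ} {γ : ℝ}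

theorem contDiff_derivX_derivX_of_schrodinger (hw : ContDiff ℝ 2 (uncurry w))
    (hN : ContDiff ℝ 1 (uncurry N))
    (hpde : ∀ x t, I * derivT w x t + I * γ * derivX w x t + 1 / 2 * derivX (derivX w) x t
      + N x t * w x t = 0) :
    ContDiff ℝ 1 (uncurry (derivX (derivX w))) := by
  have h : uncurry (derivX (derivX w)) = fun p => -2 * (I * derivT w p.1 p.2
      + I * γ * derivX w p.1 p.2 + N p.1 p.2 * w p.1 p.2) :=
    funext fun p => by
      change derivX (derivX w) p.1 p.2 = _
      linear_combination (2 : ℂ) * hpde p.1 p.2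
  rw [h]
  have hN' : ContDiff ℝ 1 fun p : ℝ × ℝ => (N p.1 p.2 : ℂ) := ofRealCLM.contDiff.comp hN
  have hwt : ContDiff ℝ 1 fun p : ℝ × ℝ => derivT w p.1 p.2 := contDiff_derivT hw
  have hwx : ContDiff ℝ 1 fun p : ℝ × ℝ => derivX w p.1 p.2 := contDiff_derivX hw
  have hw1 : ContDiff ℝ 1 fun p : ℝ × ℝ => w p.1 p.2 := hw.of_le one_le_two
  fun_prop

theorem hasBalanceAt_schrodinger {a b : ℝ → ℝ → ℝ} (hw : ContDiff ℝ 2 (uncurry w))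
    (hN : ContDiff ℝ 1 (uncurry N)) (ha : ∀ x t, a x t = (w x t).re)
    (hb : ∀ x t, b x t = (w x t).im)
    (hpde : ∀ x t, I * derivT w x t + I * γ * derivX w x t + 1 / 2 * derivX (derivX w) x t
      + N x t * w x t = 0) (x t : ℝ) :
    HasBalanceAt (schrodingerEnergy γ a b) (schrodingerFlux γ a b)
      (N x t * (a x t * derivT a x t + b x t * derivT b x t)) x t := by
  have hwd : Differentiable ℝ (uncurry w) := hw.differentiable two_ne_zero
  have hwxd : Differentiable ℝ (uncurry (derivX w)) :=
    (contDiff_derivX (n := 1) hw).differentiable one_ne_zero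
  have hwxx := contDiff_derivX_derivX_of_schrodinger hw hN hpde
  have ha' : ∀ x t, a x t = reCLM (w x t) := ha
  have hb' : ∀ x t, b x t = imCLM (w x t) := hb
  have hax := derivX_of_eq_clm reCLM ha' hwd
  have hbx := derivX_of_eq_clm imCLM hb' hwd
  have haxx := derivX_of_eq_clm reCLM hax hwxd
  have hbxx := derivX_of_eq_clm imCLM hbx hwxd
  have ha2 := contDiff_of_eq_clm reCLM ha' hw
  have hb2 := contDiff_of_eq_clm imCLM hb' hw
  have hbal := (((hasBalanceAt_kinetic ha2 (contDiff_of_eq_clm reCLM haxx hwxx) x t).add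
      (hasBalanceAt_kinetic hb2 (contDiff_of_eq_clm imCLM hbxx hwxx) x t)).const_smul
        (-(1 / 4))).add ((hasBalanceAt_transport ha2 hb2 x t).const_smul (γ / 2))
  rw [schrodingerEnergy, schrodingerFlux]
  convert hbal using 1
  have hre := congrArg re (hpde x t)
  have him := congrArg im (hpde x t)
  simp only [add_re, add_im, mul_re, mul_im, I_re, I_im, ofReal_re, ofReal_im, div_ofNat_re,
    div_ofNat_im, one_re, one_im, zero_re, zero_im] at hre him
  rw [ha, hb, derivT_of_eq_clm reCLM ha' hwd, derivT_of_eq_clm imCLM hb' hwd, hax, hbx, haxx, hbxx]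
  simp only [reCLM_apply, imCLM_apply]
  linear_combination (derivT w x t).re * hre + (derivT w x t).im * him

def couplingPotential (β : ℝ) (q₁ q₂ q₃ q₄ : ℝ → ℝ → ℝ) (x t : ℝ) : ℝ :=
  -(1 / 4) * (q₁ x t ^ 2 + q₂ x t ^ 2) ^ 2 - (1 / 4) * (q₃ x t ^ 2 + q₄ x t ^ 2) ^ 2
    - (1 / 2) * β * (q₁ x t ^ 2 + q₂ x t ^ 2) * (q₃ x t ^ 2 + q₄ x t ^ 2)

theorem hasDerivAt_couplingPotential {β x t q₁' q₂' q₃' q₄' : ℝ} {q₁ q₂ q₃ q₄ : ℝ → ℝ → ℝ}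
    (h₁ : HasDerivAt (fun τ => q₁ x τ) q₁' t) (h₂ : HasDerivAt (fun τ => q₂ x τ) q₂' t)
    (h₃ : HasDerivAt (fun τ => q₃ x τ) q₃' t) (h₄ : HasDerivAt (fun τ => q₄ x τ) q₄' t) :
    HasDerivAt (fun τ => couplingPotential β q₁ q₂ q₃ q₄ x τ)
      (-(q₁ x t ^ 2 + q₂ x t ^ 2 + β * (q₃ x t ^ 2 + q₄ x t ^ 2)) * (q₁ x t * q₁' + q₂ x t * q₂')
        - (β * (q₁ x t ^ 2 + q₂ x t ^ 2) + q₃ x t ^ 2 + q₄ x t ^ 2)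
          * (q₃ x t * q₃' + q₄ x t * q₄')) t := by
  have hρ₁ := (h₁.pow 2).add (h₂.pow 2)
  have hρ₂ := (h₃.pow 2).add (h₄.pow 2)
  refine ((((hρ₁.pow 2).const_mul (-(1 / 4))).sub ((hρ₂.pow 2).const_mul (1 / 4))).sub
    ((hρ₁.const_mul ((1 / 2) * β)).mul hρ₂)).congr_deriv ?_
  simp only [Pi.add_apply, Pi.pow_apply, Nat.cast_ofNat]
  ring

theorem hasBalanceAt_coupled_schrodinger {α β : ℝ} {u v : ℝ → ℝ → ℂ}
    {q₁ q₂ q₃ q₄ : ℝ → ℝ → ℝ} (hu : ContDiff ℝ 2 (uncurry u)) (hv : ContDiff ℝ 2 (uncurry v))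
    (hpdeu : ∀ x t, I * derivT u x t + I * α * derivX u x t + 1 / 2 * derivX (derivX u) x t
      + (u x t * conj (u x t) + β * (v x t * conj (v x t))) * u x t = 0)
    (hpdev : ∀ x t, I * derivT v x t - I * α * derivX v x t + 1 / 2 * derivX (derivX v) x t
      + (β * (u x t * conj (u x t)) + v x t * conj (v x t)) * v x t = 0)
    (hq₁ : ∀ x t, q₁ x t = (u x t).re) (hq₂ : ∀ x t, q₂ x t = (u x t).im)
    (hq₃ : ∀ x t, q₃ x t = (v x t).re) (hq₄ : ∀ x t, q₄ x t = (v x t).im) (x t : ℝ) :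
    HasBalanceAt
      (schrodingerEnergy α q₁ q₂ + schrodingerEnergy (-α) q₃ q₄ + couplingPotential β q₁ q₂ q₃ q₄)
      (schrodingerFlux α q₁ q₂ + schrodingerFlux (-α) q₃ q₄ + 0) 0 x t := by
  have hc₁ : ContDiff ℝ 1 fun p : ℝ × ℝ => q₁ p.1 p.2 :=
    contDiff_of_eq_clm reCLM hq₁ (hu.of_le one_le_two)
  have hc₂ : ContDiff ℝ 1 fun p : ℝ × ℝ => q₂ p.1 p.2 :=
    contDiff_of_eq_clm imCLM hq₂ (hu.of_le one_le_two)
  have hc₃ : ContDiff ℝ 1 fun p : ℝ × ℝ => q₃ p.1 p.2 :=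
    contDiff_of_eq_clm reCLM hq₃ (hv.of_le one_le_two)
  have hc₄ : ContDiff ℝ 1 fun p : ℝ × ℝ => q₄ p.1 p.2 :=
    contDiff_of_eq_clm imCLM hq₄ (hv.of_le one_le_two)
  have hbal_u := hasBalanceAt_schrodinger (γ := α)
    (N := fun x t => q₁ x t ^ 2 + q₂ x t ^ 2 + β * (q₃ x t ^ 2 + q₄ x t ^ 2))
    hu (by fun_prop) hq₁ hq₂ (fun x t => by
      have h := hpdeu x t
      simp only [mul_conj, normSq_apply, ← hq₁, ← hq₂, ← hq₃, ← hq₄] at h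
      push_cast at h ⊢
      linear_combination h) x t
  have hbal_v := hasBalanceAt_schrodinger (γ := -α)
    (N := fun x t => β * (q₁ x t ^ 2 + q₂ x t ^ 2) + q₃ x t ^ 2 + q₄ x t ^ 2)
    hv (by fun_prop) hq₃ hq₄ (fun x t => by
      have h := hpdev x t
      simp only [mul_conj, normSq_apply, ← hq₁, ← hq₂, ← hq₃, ← hq₄] at h
      push_cast at h ⊢
      linear_combination h) x t
  have hbal_V := hasBalanceAt_zero_flux (hasDerivAt_couplingPotential (β := β)
    (hasDerivAt_derivT (hc₁.differentiable one_ne_zero (x, t)))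
    (hasDerivAt_derivT (hc₂.differentiable one_ne_zero (x, t)))
    (hasDerivAt_derivT (hc₃.differentiable one_ne_zero (x, t)))
    (hasDerivAt_derivT (hc₄.differentiable one_ne_zero (x, t))))
  convert (hbal_u.add hbal_v).add hbal_V using 1
  ring

end Schrodinger

end CoupledNLS

end

open CoupledNLS

theorem stmt15 (α β : ℝ) (u v : ℝ → ℝ → ℂ)
    (hu : ContDiff ℝ 2 fun p : ℝ × ℝ => u p.1 p.2)
    (hv : ContDiff ℝ 2 fun p : ℝ × ℝ => v p.1 p.2)
    (hpdeu : ∀ x t,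
      Complex.I * deriv (fun τ => u x τ) t
        + Complex.I * (α : ℂ) * deriv (fun ξ => u ξ t) x
        + (1/2) * deriv (fun ξ => deriv (fun ξ' => u ξ' t) ξ) x
        + (u x t * (starRingEnd ℂ) (u x t) + (β : ℂ) * (v x t * (starRingEnd ℂ) (v x t))) * u x t
        = 0)
    (hpdev : ∀ x t,
      Complex.I * deriv (fun τ => v x τ) t
        - Complex.I * (α : ℂ) * deriv (fun ξ => v ξ t) x
        + (1/2) * deriv (fun ξ => deriv (fun ξ' => v ξ' t) ξ) x
        + ((β : ℂ) * (u x t * (starRingEnd ℂ) (u x t)) + v x t * (starRingEnd ℂ) (v x t)) * v x t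
        = 0)
    (q1 q2 q3 q4 p1 p2 p3 p4 S : ℝ → ℝ → ℝ)
    (hq1 : ∀ x t, q1 x t = (u x t).re) (hq2 : ∀ x t, q2 x t = (u x t).im)
    (hq3 : ∀ x t, q3 x t = (v x t).re) (hq4 : ∀ x t, q4 x t = (v x t).im)
    (hp1 : ∀ x t, p1 x t = (1/2) * deriv (fun ξ => q1 ξ t) x)
    (hp2 : ∀ x t, p2 x t = (1/2) * deriv (fun ξ => q2 ξ t) x)
    (hp3 : ∀ x t, p3 x t = (1/2) * deriv (fun ξ => q3 ξ t) x)
    (hp4 : ∀ x t, p4 x t = (1/2) * deriv (fun ξ => q4 ξ t) x)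
    (hS : ∀ x t, S x t = -(1/4) * (q1 x t ^ 2 + q2 x t ^ 2) ^ 2
        - (1/4) * (q3 x t ^ 2 + q4 x t ^ 2) ^ 2
        - (1/2) * β * (q1 x t ^ 2 + q2 x t ^ 2) * (q3 x t ^ 2 + q4 x t ^ 2)
        - (p1 x t ^ 2 + p2 x t ^ 2 + p3 x t ^ 2 + p4 x t ^ 2))
    (E F : ℝ → ℝ → ℝ) (hE : ∀ x t, E x t = S x t
        - α * (q2 x t * p1 x t - q1 x t * p2 x t + q3 x t * p4 x t - q4 x t * p3 x t)
        - (1/2) * ((q1 x t * deriv (fun ξ => p1 ξ t) x - 2 * p1 x t ^ 2)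
          + (q2 x t * deriv (fun ξ => p2 ξ t) x - 2 * p2 x t ^ 2)
          + (q3 x t * deriv (fun ξ => p3 ξ t) x - 2 * p3 x t ^ 2)
          + (q4 x t * deriv (fun ξ => p4 ξ t) x - 2 * p4 x t ^ 2)))
    (hF : ∀ x t, F x t = (1/2) * (α * (q2 x t * deriv (fun τ => q1 x τ) t
          - q1 x t * deriv (fun τ => q2 x τ) t
          + q3 x t * deriv (fun τ => q4 x τ) t
          - q4 x t * deriv (fun τ => q3 x τ) t)
        + ((q1 x t * deriv (fun τ => p1 x τ) t - p1 x t * deriv (fun τ => q1 x τ) t)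
          + (q2 x t * deriv (fun τ => p2 x τ) t - p2 x t * deriv (fun τ => q2 x τ) t)
          + (q3 x t * deriv (fun τ => p3 x τ) t - p3 x t * deriv (fun τ => q3 x τ) t)
          + (q4 x t * deriv (fun τ => p4 x τ) t - p4 x t * deriv (fun τ => q4 x τ) t)))) :
    ∀ x t, deriv (fun τ => E x τ) t + deriv (fun ξ => F ξ t) x = 0 := by
  intro x t
  have hE' : E = schrodingerEnergy α q1 q2 + schrodingerEnergy (-α) q3 q4
      + couplingPotential β q1 q2 q3 q4 := by
    funext x t
    simp only [hE, hS, hp1, hp2, hp3, hp4, deriv_const_mul_field', schrodingerEnergy,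
      kineticDensity, transportDensity, couplingPotential, derivX, Pi.add_apply, Pi.smul_apply,
      smul_eq_mul]
    ring
  have hF' : F = schrodingerFlux α q1 q2 + schrodingerFlux (-α) q3 q4 + 0 := by
    funext x t
    simp only [hF, hp1, hp2, hp3, hp4, deriv_const_mul_field', schrodingerFlux, kineticFlux,
      transportFlux, derivX, derivT, Pi.add_apply, Pi.smul_apply, Pi.zero_apply, smul_eq_mul]
    ring
  rw [hE', hF']
  exact (hasBalanceAt_coupled_schrodinger hu hv hpdeu hpdev hq1 hq2 hq3 hq4 x t).derivT_add_derivX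
end

section
/- (Local momentum conservation law of the coupled nonlinear Schrödinger equations) Let α, β ∈ ℝ and let u, v : ℝ × ℝ → ℂ, (x,t) ↦ u(x,t), v(x,t), be twice continuously differentiable solutions of i u_t + i α u_x + (1/2) u_xx + (|u|² + β|v|²) u = 0 and i v_t − i α v_x + (1/2) v_xx + (β|u|² + |v|²) v = 0. Write u = q₁ + i q₂, v = q₃ + i q₄ with q₁, q₂, q₃, q₄ real, and set p_i = (1/2) ∂_x q_i for i = 1,2,3,4, S = −(1/4)(q₁²+q₂²)² − (1/4)(q₃²+q₄²)² − (1/2) β (q₁²+q₂²)(q₃²+q₄²) − (p₁²+p₂²+p₃²+p₄²), I = q₂p₁ − q₁p₂ + q₄p₃ − q₃p₄, and G = S − (1/2)(q₂∂_t q₁ − q₁∂_t q₂ + q₄∂_t q₃ − q₃∂_t q₄). Then ∂_t I + ∂_x G = 0 everywhere. -/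
/-!
Write `u = q₁ + i q₂` and `v = q₃ + i q₄`. For a single field `w = a + i b` solving
`i w_t + i c w_x + ½ w_xx + N w = 0` with a real coefficient `N`, the time derivative of
`½ (b a_x - a b_x)` plus the space derivative of `-¼ (a_x² + b_x²) - ½ (b a_t - a b_t)` equals
`½ N ∂ₓ(a² + b²)`: the mixed derivatives cancel by the symmetry of second derivatives and the
drift terms `c` cancel each other. With `N = |u|² + β|v|²` for `u` and `N = β|u|² + |v|²` for `v`,
the two right-hand sides add up to minus the `x`-derivative of the quartic part of `S`.
-/

noncomputable section

section PartialDerivatives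

variable {E F : Type*} [NormedAddCommGroup E] [NormedSpace ℝ E] [NormedAddCommGroup F]
  [NormedSpace ℝ F] {f g : ℝ → ℝ → E}

def partialX (f : ℝ → ℝ → E) (x t : ℝ) : E :=
  deriv (fun ξ => f ξ t) x

def partialT (f : ℝ → ℝ → E) (x t : ℝ) : E :=
  deriv (fun τ => f x τ) t

theorem hasDerivAt_fderiv_partialX (hf : Differentiable ℝ (Function.uncurry f)) (x t : ℝ) :
    HasDerivAt (fun ξ => f ξ t) (fderiv ℝ (Function.uncurry f) (x, t) (1, 0)) x := by
  exact (hf (x, t)).hasFDerivAt.comp_hasDerivAt x ((hasDerivAt_id x).prodMk (hasDerivAt_const x t))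

theorem hasDerivAt_fderiv_partialT (hf : Differentiable ℝ (Function.uncurry f)) (x t : ℝ) :
    HasDerivAt (fun τ => f x τ) (fderiv ℝ (Function.uncurry f) (x, t) (0, 1)) t := by
  exact (hf (x, t)).hasFDerivAt.comp_hasDerivAt t ((hasDerivAt_const t x).prodMk (hasDerivAt_id t))

theorem partialX_eq_fderiv (hf : Differentiable ℝ (Function.uncurry f)) :
    partialX f = fun x t => fderiv ℝ (Function.uncurry f) (x, t) (1, 0) := by
  ext x t
  exact (hasDerivAt_fderiv_partialX hf x t).deriv

theorem partialT_eq_fderiv (hf : Differentiable ℝ (Function.uncurry f)) :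
    partialT f = fun x t => fderiv ℝ (Function.uncurry f) (x, t) (0, 1) := by
  ext x t
  exact (hasDerivAt_fderiv_partialT hf x t).deriv

theorem hasDerivAt_partialX (hf : Differentiable ℝ (Function.uncurry f)) (x t : ℝ) :
    HasDerivAt (fun ξ => f ξ t) (partialX f x t) x := by
  rw [partialX_eq_fderiv hf]
  exact hasDerivAt_fderiv_partialX hf x t

theorem hasDerivAt_partialT (hf : Differentiable ℝ (Function.uncurry f)) (x t : ℝ) :
    HasDerivAt (fun τ => f x τ) (partialT f x t) t := by
  rw [partialT_eq_fderiv hf]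
  exact hasDerivAt_fderiv_partialT hf x t

theorem HasDerivAt.partialX_eq {v : E} {x t : ℝ} (h : HasDerivAt (fun ξ => f ξ t) v x) :
    partialX f x t = v :=
  h.deriv

theorem HasDerivAt.partialT_eq {v : E} {x t : ℝ} (h : HasDerivAt (fun τ => f x τ) v t) :
    partialT f x t = v :=
  h.deriv

theorem differentiable_uncurry_add (hf : Differentiable ℝ (Function.uncurry f))
    (hg : Differentiable ℝ (Function.uncurry g)) : Differentiable ℝ (Function.uncurry (f + g)) :=
  hf.add hg

theorem partialX_add (hf : Differentiable ℝ (Function.uncurry f))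
    (hg : Differentiable ℝ (Function.uncurry g)) :
    partialX (f + g) = partialX f + partialX g := by
  ext x t
  exact ((hasDerivAt_partialX hf x t).add (hasDerivAt_partialX hg x t)).partialX_eq

theorem partialT_add (hf : Differentiable ℝ (Function.uncurry f))
    (hg : Differentiable ℝ (Function.uncurry g)) :
    partialT (f + g) = partialT f + partialT g := by
  ext x t
  exact ((hasDerivAt_partialT hf x t).add (hasDerivAt_partialT hg x t)).partialT_eq

theorem partialX_clm_comp (L : E →L[ℝ] F) (hf : Differentiable ℝ (Function.uncurry f)) :
    partialX (fun x t => L (f x t)) = fun x t => L (partialX f x t) := by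
  ext x t
  exact (L.hasFDerivAt.comp_hasDerivAt x (hasDerivAt_partialX hf x t)).partialX_eq

theorem partialT_clm_comp (L : E →L[ℝ] F) (hf : Differentiable ℝ (Function.uncurry f)) :
    partialT (fun x t => L (f x t)) = fun x t => L (partialT f x t) := by
  ext x t
  exact (L.hasFDerivAt.comp_hasDerivAt t (hasDerivAt_partialT hf x t)).partialT_eq

theorem contDiff_partialX {m n : WithTop ℕ∞} (hf : ContDiff ℝ n (Function.uncurry f))
    (hmn : m + 1 ≤ n) : ContDiff ℝ m (Function.uncurry (partialX f)) := by
  rw [partialX_eq_fderiv (hf.differentiable (by rintro rfl; simp at hmn))]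
  exact (ContinuousLinearMap.apply ℝ E ((1, 0) : ℝ × ℝ)).contDiff.comp (hf.fderiv_right hmn)

theorem contDiff_partialT {m n : WithTop ℕ∞} (hf : ContDiff ℝ n (Function.uncurry f))
    (hmn : m + 1 ≤ n) : ContDiff ℝ m (Function.uncurry (partialT f)) := by
  rw [partialT_eq_fderiv (hf.differentiable (by rintro rfl; simp at hmn))]
  exact (ContinuousLinearMap.apply ℝ E ((0, 1) : ℝ × ℝ)).contDiff.comp (hf.fderiv_right hmn)

theorem differentiable_partialX (hf : ContDiff ℝ 2 (Function.uncurry f)) :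
    Differentiable ℝ (Function.uncurry (partialX f)) :=
  (contDiff_partialX hf (m := 1) le_rfl).differentiable one_ne_zero

theorem differentiable_partialT (hf : ContDiff ℝ 2 (Function.uncurry f)) :
    Differentiable ℝ (Function.uncurry (partialT f)) :=
  (contDiff_partialT hf (m := 1) le_rfl).differentiable one_ne_zero

theorem partialT_partialX (hf : ContDiff ℝ 2 (Function.uncurry f)) :
    partialT (partialX f) = partialX (partialT f) := by
  set F := Function.uncurry f
  have hF := hf.differentiable two_ne_zero
  have hF' : Differentiable ℝ (fderiv ℝ F) :=
    (hf.fderiv_right (m := 1) le_rfl).differentiable one_ne_zero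
  have fderiv_apply (v w p : ℝ × ℝ) :
      fderiv ℝ (fun q => fderiv ℝ F q v) p w = fderiv ℝ (fderiv ℝ F) p w v := by
    have h : HasFDerivAt (fun q => fderiv ℝ F q v)
        ((ContinuousLinearMap.apply ℝ E v).comp (fderiv ℝ (fderiv ℝ F) p)) p :=
      (ContinuousLinearMap.apply ℝ E v).hasFDerivAt.comp p (hF' p).hasFDerivAt
    rw [h.fderiv]
    rfl
  ext x t
  rw [partialT_eq_fderiv (differentiable_partialX hf),
    partialX_eq_fderiv (differentiable_partialT hf), partialX_eq_fderiv hF, partialT_eq_fderiv hF]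
  change fderiv ℝ (fun q => fderiv ℝ F q (1, 0)) (x, t) (0, 1)
    = fderiv ℝ (fun q => fderiv ℝ F q (0, 1)) (x, t) (1, 0)
  rw [fderiv_apply, fderiv_apply]
  exact hf.contDiffAt.isSymmSndFDerivAt (by simp) _ _

end PartialDerivatives

section LocalBalance

variable {a b : ℝ → ℝ → ℝ}

def massDensity (a b : ℝ → ℝ → ℝ) (x t : ℝ) : ℝ :=
  a x t ^ 2 + b x t ^ 2

def momentumDensity (a b : ℝ → ℝ → ℝ) (x t : ℝ) : ℝ :=
  1 / 2 * (b x t * partialX a x t - a x t * partialX b x t)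

def momentumFlux (a b : ℝ → ℝ → ℝ) (x t : ℝ) : ℝ :=
  -(1 / 4) * (partialX a x t ^ 2 + partialX b x t ^ 2)
    - 1 / 2 * (b x t * partialT a x t - a x t * partialT b x t)

def quarticPotential (β : ℝ) (ρ σ : ℝ → ℝ → ℝ) (x t : ℝ) : ℝ :=
  -(1 / 4) * ρ x t ^ 2 - 1 / 4 * σ x t ^ 2 - 1 / 2 * β * ρ x t * σ x t

theorem differentiable_massDensity (ha : Differentiable ℝ (Function.uncurry a))
    (hb : Differentiable ℝ (Function.uncurry b)) :
    Differentiable ℝ (Function.uncurry (massDensity a b)) :=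
  (ha.pow 2).add (hb.pow 2)

theorem differentiable_momentumDensity (ha : ContDiff ℝ 2 (Function.uncurry a))
    (hb : ContDiff ℝ 2 (Function.uncurry b)) :
    Differentiable ℝ (Function.uncurry (momentumDensity a b)) :=
  (((hb.differentiable two_ne_zero).mul (differentiable_partialX ha)).sub
    ((ha.differentiable two_ne_zero).mul (differentiable_partialX hb))).const_mul _

theorem differentiable_momentumFlux (ha : ContDiff ℝ 2 (Function.uncurry a))
    (hb : ContDiff ℝ 2 (Function.uncurry b)) :
    Differentiable ℝ (Function.uncurry (momentumFlux a b)) :=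
  ((((differentiable_partialX ha).pow 2).add ((differentiable_partialX hb).pow 2)).const_mul _).sub
    ((((hb.differentiable two_ne_zero).mul (differentiable_partialT ha)).sub
      ((ha.differentiable two_ne_zero).mul (differentiable_partialT hb))).const_mul _)

theorem differentiable_quarticPotential {β : ℝ} {ρ σ : ℝ → ℝ → ℝ}
    (hρ : Differentiable ℝ (Function.uncurry ρ)) (hσ : Differentiable ℝ (Function.uncurry σ)) :
    Differentiable ℝ (Function.uncurry (quarticPotential β ρ σ)) :=
  (((hρ.pow 2).const_mul _).sub ((hσ.pow 2).const_mul _)).sub ((hρ.const_mul _).mul hσ)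

theorem partialX_massDensity (ha : Differentiable ℝ (Function.uncurry a))
    (hb : Differentiable ℝ (Function.uncurry b)) (x t : ℝ) :
    partialX (massDensity a b) x t = 2 * (a x t * partialX a x t + b x t * partialX b x t) := by
  have h : HasDerivAt (fun ξ => massDensity a b ξ t) _ x :=
    ((hasDerivAt_partialX ha x t).pow 2).add ((hasDerivAt_partialX hb x t).pow 2)
  rw [h.partialX_eq]
  ring

theorem partialX_quarticPotential {β : ℝ} {ρ σ : ℝ → ℝ → ℝ}
    (hρ : Differentiable ℝ (Function.uncurry ρ)) (hσ : Differentiable ℝ (Function.uncurry σ))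
    (x t : ℝ) :
    partialX (quarticPotential β ρ σ) x t = -(1 / 2) * (ρ x t + β * σ x t) * partialX ρ x t
      - 1 / 2 * (β * ρ x t + σ x t) * partialX σ x t := by
  have hρx := hasDerivAt_partialX hρ x t
  have hσx := hasDerivAt_partialX hσ x t
  have h : HasDerivAt (fun ξ => quarticPotential β ρ σ ξ t) _ x :=
    (((hρx.pow 2).const_mul _).sub ((hσx.pow 2).const_mul _)).sub ((hρx.const_mul _).mul hσx)
  rw [h.partialX_eq]
  ring

theorem partialT_momentumDensity_add_partialX_momentumFlux
    (ha : ContDiff ℝ 2 (Function.uncurry a)) (hb : ContDiff ℝ 2 (Function.uncurry b))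
    {c N x t : ℝ}
    (hre : -partialT b x t - c * partialX b x t + 1 / 2 * partialX (partialX a) x t
      + N * a x t = 0)
    (him : partialT a x t + c * partialX a x t + 1 / 2 * partialX (partialX b) x t
      + N * b x t = 0) :
    partialT (momentumDensity a b) x t + partialX (momentumFlux a b) x t
      = N / 2 * partialX (massDensity a b) x t := by
  have ha' := ha.differentiable two_ne_zero
  have hb' := hb.differentiable two_ne_zero
  have hdensity : HasDerivAt (fun τ => momentumDensity a b x τ) _ t :=
    (((hasDerivAt_partialT hb' x t).mul (hasDerivAt_partialT (differentiable_partialX ha) x t)).sub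
      ((hasDerivAt_partialT ha' x t).mul
        (hasDerivAt_partialT (differentiable_partialX hb) x t))).const_mul _
  have hflux : HasDerivAt (fun ξ => momentumFlux a b ξ t) _ x :=
    ((((hasDerivAt_partialX (differentiable_partialX ha) x t).pow 2).add
      ((hasDerivAt_partialX (differentiable_partialX hb) x t).pow 2)).const_mul _).sub
      ((((hasDerivAt_partialX hb' x t).mul
          (hasDerivAt_partialX (differentiable_partialT ha) x t)).sub
        ((hasDerivAt_partialX ha' x t).mul
          (hasDerivAt_partialX (differentiable_partialT hb) x t))).const_mul _)
  rw [hdensity.partialT_eq, hflux.partialX_eq, partialX_massDensity ha' hb',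
    partialT_partialX ha, partialT_partialX hb]
  linear_combination (-partialX a x t) * hre - partialX b x t * him

theorem coupled_momentum_conservation {a₁ b₁ a₂ b₂ : ℝ → ℝ → ℝ}
    (ha₁ : ContDiff ℝ 2 (Function.uncurry a₁)) (hb₁ : ContDiff ℝ 2 (Function.uncurry b₁))
    (ha₂ : ContDiff ℝ 2 (Function.uncurry a₂)) (hb₂ : ContDiff ℝ 2 (Function.uncurry b₂))
    {β c₁ c₂ x t : ℝ}
    (hre₁ : -partialT b₁ x t - c₁ * partialX b₁ x t + 1 / 2 * partialX (partialX a₁) x t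
      + (massDensity a₁ b₁ x t + β * massDensity a₂ b₂ x t) * a₁ x t = 0)
    (him₁ : partialT a₁ x t + c₁ * partialX a₁ x t + 1 / 2 * partialX (partialX b₁) x t
      + (massDensity a₁ b₁ x t + β * massDensity a₂ b₂ x t) * b₁ x t = 0)
    (hre₂ : -partialT b₂ x t - c₂ * partialX b₂ x t + 1 / 2 * partialX (partialX a₂) x t
      + (β * massDensity a₁ b₁ x t + massDensity a₂ b₂ x t) * a₂ x t = 0)
    (him₂ : partialT a₂ x t + c₂ * partialX a₂ x t + 1 / 2 * partialX (partialX b₂) x t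
      + (β * massDensity a₁ b₁ x t + massDensity a₂ b₂ x t) * b₂ x t = 0) :
    partialT (momentumDensity a₁ b₁ + momentumDensity a₂ b₂) x t
      + partialX (quarticPotential β (massDensity a₁ b₁) (massDensity a₂ b₂)
        + momentumFlux a₁ b₁ + momentumFlux a₂ b₂) x t = 0 := by
  have hρ₁ := differentiable_massDensity (ha₁.differentiable two_ne_zero)
    (hb₁.differentiable two_ne_zero)
  have hρ₂ := differentiable_massDensity (ha₂.differentiable two_ne_zero)
    (hb₂.differentiable two_ne_zero)
  have hV := differentiable_quarticPotential (β := β) hρ₁ hρ₂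
  rw [partialT_add (differentiable_momentumDensity ha₁ hb₁)
      (differentiable_momentumDensity ha₂ hb₂),
    partialX_add (differentiable_uncurry_add hV (differentiable_momentumFlux ha₁ hb₁))
      (differentiable_momentumFlux ha₂ hb₂),
    partialX_add hV (differentiable_momentumFlux ha₁ hb₁)]
  simp only [Pi.add_apply]
  linear_combination partialT_momentumDensity_add_partialX_momentumFlux ha₁ hb₁ hre₁ him₁
    + partialT_momentumDensity_add_partialX_momentumFlux ha₂ hb₂ hre₂ him₂
    + partialX_quarticPotential (β := β) hρ₁ hρ₂ x t

end LocalBalance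

section RealForm

variable {w : ℝ → ℝ → ℂ} {a b : ℝ → ℝ → ℝ}

theorem partialX_re (hw : Differentiable ℝ (Function.uncurry w)) :
    partialX (fun x t => (w x t).re) = fun x t => (partialX w x t).re :=
  partialX_clm_comp Complex.reCLM hw

theorem partialX_im (hw : Differentiable ℝ (Function.uncurry w)) :
    partialX (fun x t => (w x t).im) = fun x t => (partialX w x t).im :=
  partialX_clm_comp Complex.imCLM hw

theorem partialT_re (hw : Differentiable ℝ (Function.uncurry w)) :
    partialT (fun x t => (w x t).re) = fun x t => (partialT w x t).re :=
  partialT_clm_comp Complex.reCLM hw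

theorem partialT_im (hw : Differentiable ℝ (Function.uncurry w)) :
    partialT (fun x t => (w x t).im) = fun x t => (partialT w x t).im :=
  partialT_clm_comp Complex.imCLM hw

theorem contDiff_re_im {n : WithTop ℕ∞} (hw : ContDiff ℝ n (Function.uncurry w))
    (ha : ∀ x t, a x t = (w x t).re) (hb : ∀ x t, b x t = (w x t).im) :
    ContDiff ℝ n (Function.uncurry a) ∧ ContDiff ℝ n (Function.uncurry b) := by
  obtain rfl := funext₂ ha
  obtain rfl := funext₂ hb
  exact ⟨Complex.reCLM.contDiff.comp hw, Complex.imCLM.contDiff.comp hw⟩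

theorem ofReal_massDensity (ha : ∀ x t, a x t = (w x t).re) (hb : ∀ x t, b x t = (w x t).im)
    (x t : ℝ) : (massDensity a b x t : ℂ) = w x t * (starRingEnd ℂ) (w x t) := by
  rw [Complex.mul_conj, Complex.normSq_apply, massDensity, ha, hb]
  push_cast
  ring

theorem schrodinger_re_im (hw : ContDiff ℝ 2 (Function.uncurry w))
    (ha : ∀ x t, a x t = (w x t).re) (hb : ∀ x t, b x t = (w x t).im) {c N x t : ℝ}
    (h : Complex.I * partialT w x t + Complex.I * c * partialX w x t
      + 1 / 2 * partialX (partialX w) x t + N * w x t = 0) :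
    -partialT b x t - c * partialX b x t + 1 / 2 * partialX (partialX a) x t + N * a x t = 0 ∧
      partialT a x t + c * partialX a x t + 1 / 2 * partialX (partialX b) x t + N * b x t = 0 := by
  obtain rfl := funext₂ ha
  obtain rfl := funext₂ hb
  have hw' := hw.differentiable two_ne_zero
  have hwx := differentiable_partialX hw
  rw [partialT_re hw', partialT_im hw', partialX_re hw', partialX_im hw', partialX_re hwx,
    partialX_im hwx]
  have hre := congrArg Complex.re h
  have him := congrArg Complex.im h
  simp only [Complex.add_re, Complex.add_im, Complex.mul_re, Complex.mul_im, Complex.I_re,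
    Complex.I_im, Complex.ofReal_re, Complex.ofReal_im, Complex.div_ofNat_re, Complex.div_ofNat_im,
    Complex.one_re, Complex.one_im, Complex.zero_re, Complex.zero_im] at hre him
  constructor <;> linarith

end RealForm

end

theorem stmt16 (α β : ℝ) (u v : ℝ → ℝ → ℂ)
    (hu : ContDiff ℝ 2 fun p : ℝ × ℝ => u p.1 p.2)
    (hv : ContDiff ℝ 2 fun p : ℝ × ℝ => v p.1 p.2)
    (hpdeu : ∀ x t,
      Complex.I * deriv (fun τ => u x τ) t
        + Complex.I * (α : ℂ) * deriv (fun ξ => u ξ t) x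
        + (1/2) * deriv (fun ξ => deriv (fun ξ' => u ξ' t) ξ) x
        + (u x t * (starRingEnd ℂ) (u x t) + (β : ℂ) * (v x t * (starRingEnd ℂ) (v x t))) * u x t
        = 0)
    (hpdev : ∀ x t,
      Complex.I * deriv (fun τ => v x τ) t
        - Complex.I * (α : ℂ) * deriv (fun ξ => v ξ t) x
        + (1/2) * deriv (fun ξ => deriv (fun ξ' => v ξ' t) ξ) x
        + ((β : ℂ) * (u x t * (starRingEnd ℂ) (u x t)) + v x t * (starRingEnd ℂ) (v x t)) * v x t
        = 0)
    (q1 q2 q3 q4 p1 p2 p3 p4 S : ℝ → ℝ → ℝ)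
    (hq1 : ∀ x t, q1 x t = (u x t).re) (hq2 : ∀ x t, q2 x t = (u x t).im)
    (hq3 : ∀ x t, q3 x t = (v x t).re) (hq4 : ∀ x t, q4 x t = (v x t).im)
    (hp1 : ∀ x t, p1 x t = (1/2) * deriv (fun ξ => q1 ξ t) x)
    (hp2 : ∀ x t, p2 x t = (1/2) * deriv (fun ξ => q2 ξ t) x)
    (hp3 : ∀ x t, p3 x t = (1/2) * deriv (fun ξ => q3 ξ t) x)
    (hp4 : ∀ x t, p4 x t = (1/2) * deriv (fun ξ => q4 ξ t) x)
    (hS : ∀ x t, S x t = -(1/4) * (q1 x t ^ 2 + q2 x t ^ 2) ^ 2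
        - (1/4) * (q3 x t ^ 2 + q4 x t ^ 2) ^ 2
        - (1/2) * β * (q1 x t ^ 2 + q2 x t ^ 2) * (q3 x t ^ 2 + q4 x t ^ 2)
        - (p1 x t ^ 2 + p2 x t ^ 2 + p3 x t ^ 2 + p4 x t ^ 2))
    (I G : ℝ → ℝ → ℝ)
    (hI : ∀ x t, I x t = q2 x t * p1 x t - q1 x t * p2 x t
        + q4 x t * p3 x t - q3 x t * p4 x t)
    (hG : ∀ x t, G x t = S x t - (1/2) * (q2 x t * deriv (fun τ => q1 x τ) t
        - q1 x t * deriv (fun τ => q2 x τ) t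
        + q4 x t * deriv (fun τ => q3 x τ) t
        - q3 x t * deriv (fun τ => q4 x τ) t)) :
    ∀ x t, deriv (fun τ => I x τ) t + deriv (fun ξ => G ξ t) x = 0 := by
  obtain ⟨hq1', hq2'⟩ := contDiff_re_im hu hq1 hq2
  obtain ⟨hq3', hq4'⟩ := contDiff_re_im hv hq3 hq4
  have hI' : I = momentumDensity q1 q2 + momentumDensity q3 q4 := by
    funext x t
    simp only [hI, hp1, hp2, hp3, hp4, momentumDensity, partialX, Pi.add_apply]
    ring
  have hG' : G = quarticPotential β (massDensity q1 q2) (massDensity q3 q4)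
      + momentumFlux q1 q2 + momentumFlux q3 q4 := by
    funext x t
    simp only [hG, hS, hp1, hp2, hp3, hp4, quarticPotential, massDensity, momentumFlux, partialX,
      partialT, Pi.add_apply]
    ring
  intro x t
  have hpu : Complex.I * partialT u x t + Complex.I * α * partialX u x t
      + 1 / 2 * partialX (partialX u) x t
      + ↑(massDensity q1 q2 x t + β * massDensity q3 q4 x t) * u x t = 0 := by
    push_cast
    rw [ofReal_massDensity hq1 hq2, ofReal_massDensity hq3 hq4]
    exact hpdeu x t
  have hpv : Complex.I * partialT v x t + Complex.I * ↑(-α) * partialX v x t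
      + 1 / 2 * partialX (partialX v) x t
      + ↑(β * massDensity q1 q2 x t + massDensity q3 q4 x t) * v x t = 0 := by
    simp only [partialT, partialX]
    push_cast
    rw [ofReal_massDensity hq1 hq2, ofReal_massDensity hq3 hq4]
    linear_combination hpdev x t
  obtain ⟨hre1, him1⟩ := schrodinger_re_im hu hq1 hq2 hpu
  obtain ⟨hre2, him2⟩ := schrodinger_re_im hv hq3 hq4 hpv
  change partialT I x t + partialX G x t = 0
  rw [hI', hG']
  exact coupled_momentum_conservation hq1' hq2' hq3' hq4' hre1 him1 hre2 him2
end
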